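/- Let 2 ≤ m < q. The injection code Inj(m,q), consisting of all m-tuples over Q with pairwise distinct entries, is neighbour transitive in H(m,q), has automorphism group Aut(Inj(m,q)) = Diag_m(S_q) ⋊ L, and has minimum distance δ = 1. -/

import Mathlib

open Equiv Pointwise

section HammingDefs

variable {I : Type*} [Fintype I] [DecidableEq I] {q : ℕ}

/-- The permutation of the vertex set of the Hamming graph `H(I,q)` induced by the
letter permutations `g i` (acting coordinatewise) followed by the coordinate
permutation `σ`:  `(α^x)_i = g_{σ⁻¹ i} (α_{σ⁻¹ i})`. -/
def tvp (g : I → Equiv.Perm (Fin q)) (σ : Equiv.Perm I) : Equiv.Perm (I → Fin q) where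
  toFun α i := g (σ⁻¹ i) (α (σ⁻¹ i))
  invFun β i := (g i)⁻¹ (β (σ i))
  left_inv α := by funext i; simp
  right_inv β := by funext i; simp

/-- The automorphism group of the Hamming graph `H(I,q)`: all permutations of the
vertex set preserving adjacency (Hamming distance 1). -/
def autH (I : Type*) [Fintype I] [DecidableEq I] (q : ℕ) :
    Subgroup (Equiv.Perm (I → Fin q)) where
  carrier := {y | ∀ α β : I → Fin q, hammingDist (y α) (y β) = 1 ↔ hammingDist α β = 1}
  one_mem' := by intro α β; simp
  mul_mem' := by
    intro a b ha hb α β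
    rw [Equiv.Perm.mul_apply, Equiv.Perm.mul_apply, ha, hb]
  inv_mem' := by
    intro a ha α β
    simpa using (ha (a⁻¹ α) (a⁻¹ β)).symm

/-- The homomorphism `S_q × S_I → Sym(V(H(I,q)))` whose image is `Diag(S_q) ⋊ L`. -/
def diagLHom (I : Type*) [Fintype I] [DecidableEq I] (q : ℕ) :
    Equiv.Perm (Fin q) × Equiv.Perm I →* Equiv.Perm (I → Fin q) where
  toFun x := tvp (fun _ => x.1) x.2
  map_one' := by
    ext α i
    simp [tvp]
  map_mul' x y := by
    ext α i
    simp [tvp, mul_inv_rev]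

/-- The subgroup `Diag_I(S_q) ⋊ L` of the automorphism group of `H(I,q)`. -/
def diagL (I : Type*) [Fintype I] [DecidableEq I] (q : ℕ) :
    Subgroup (Equiv.Perm (I → Fin q)) :=
  (diagLHom I q).range

/-- The subgroup `L` of pure coordinate permutations of `H(I,q)`. -/
def permL (I : Type*) [Fintype I] [DecidableEq I] (q : ℕ) :
    Subgroup (Equiv.Perm (I → Fin q)) :=
  ((diagLHom I q).comp (MonoidHom.inr (Equiv.Perm (Fin q)) (Equiv.Perm I))).range

/-- Distance from a vertex to a code. -/
noncomputable def distC (γ : I → Fin q) (C : Set (I → Fin q)) : ℕ :=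
  sInf {d | ∃ β ∈ C, hammingDist γ β = d}

/-- The cell `C_i` of the distance partition of the code `C`. -/
def cell (C : Set (I → Fin q)) (i : ℕ) : Set (I → Fin q) :=
  {γ | distC γ C = i}

/-- The covering radius of the code `C`. -/
noncomputable def covRad (C : Set (I → Fin q)) : ℕ :=
  sSup {d | ∃ γ : I → Fin q, distC γ C = d}

/-- The minimum distance of the code `C`. -/
noncomputable def minDist (C : Set (I → Fin q)) : ℕ :=
  sInf {d | ∃ β ∈ C, ∃ γ ∈ C, β ≠ γ ∧ hammingDist β γ = d}

/-- `S` is an orbit of the subgroup `X` of permutations of the vertex set. -/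
def IsOrbitOf (X : Subgroup (Equiv.Perm (I → Fin q))) (S : Set (I → Fin q)) : Prop :=
  ∃ v, S = {w | ∃ x ∈ X, x v = w}

/-- `C` is `X`-neighbour transitive: `X` is a group of automorphisms of the Hamming
graph, and both `C` and its set of neighbours `C_1` are `X`-orbits. -/
def NbrTransitive (X : Subgroup (Equiv.Perm (I → Fin q))) (C : Set (I → Fin q)) : Prop :=
  X ≤ autH I q ∧ IsOrbitOf X C ∧ IsOrbitOf X (cell C 1)

/-- `C` is `X`-completely transitive: every cell of the distance partition is an `X`-orbit. -/
def ComplTransitive (X : Subgroup (Equiv.Perm (I → Fin q))) (C : Set (I → Fin q)) : Prop :=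
  X ≤ autH I q ∧ ∀ i ≤ covRad C, IsOrbitOf X (cell C i)

/-- `C` is diagonally `X`-neighbour transitive. -/
def DiagNbrTransitive (X : Subgroup (Equiv.Perm (I → Fin q))) (C : Set (I → Fin q)) : Prop :=
  NbrTransitive X C ∧ X ≤ diagL I q

/-- The automorphism group of the code `C`: the setwise stabiliser of `C` in the
automorphism group of the Hamming graph. -/
def autCode (C : Set (I → Fin q)) : Subgroup (Equiv.Perm (I → Fin q)) :=
  autH I q ⊓ MulAction.stabilizer (Equiv.Perm (I → Fin q)) C

/-- Number of occurrences of the letter `a` in the vertex `α`. -/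
def cnt (α : I → Fin q) (a : Fin q) : ℕ :=
  (Finset.univ.filter fun i => α i = a).card

/-- The composition `Q(α)` of a vertex: the set of pairs `(a, p)` such that the letter `a`
occurs exactly `p > 0` times in `α`. -/
def compOf (α : I → Fin q) : Set (Fin q × ℕ) :=
  {x | 0 < x.2 ∧ cnt α x.1 = x.2}

/-- `Num(α)`: the set of pairs `(p, s)` such that exactly `s > 0` distinct letters occur
exactly `p > 0` times in `α`. -/
def numOf (α : I → Fin q) : Set (ℕ × ℕ) :=
  {x | 0 < x.1 ∧ 0 < x.2 ∧ (Finset.univ.filter fun a => cnt α a = x.1).card = x.2}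

/-- The repetition code `Rep(I,q)`. -/
def repCode (I : Type*) [Fintype I] [DecidableEq I] (q : ℕ) : Set (I → Fin q) :=
  {α | ∃ a, α = fun _ => a}

/-- The injection code `Inj(I,q)`: all tuples with pairwise distinct entries. -/
def injCode (I : Type*) [Fintype I] [DecidableEq I] (q : ℕ) : Set (I → Fin q) :=
  {α | Function.Injective α}

/-- The code `All(pq,q)`: all vertices in which every letter occurs exactly `p` times. -/
def allCode (I : Type*) [Fintype I] [DecidableEq I] (q p : ℕ) : Set (I → Fin q) :=
  {α | ∀ a, cnt α a = p}

/-- `C` is `s`-regular. -/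
def RegularUpTo (C : Set (I → Fin q)) (s : ℕ) : Prop :=
  ∀ i ≤ s, ∀ γ ∈ cell C i, ∀ γ' ∈ cell C i, ∀ k : ℕ,
    {β ∈ C | hammingDist γ β = k}.ncard = {β ∈ C | hammingDist γ' β = k}.ncard

/-- `C` is completely regular. -/
def ComplRegular (C : Set (I → Fin q)) : Prop :=
  RegularUpTo C (covRad C)

/-- `C` is a constant composition code: every letter occurs the same positive number of
times in every codeword. -/
def IsCCC (C : Set (I → Fin q)) : Prop :=
  C.Nonempty ∧ ∃ f : Fin q → ℕ, (∀ a, 0 < f a) ∧ ∀ β ∈ C, ∀ a, cnt β a = f a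

end HammingDefs

section Weight

/-- The weight of a binary vertex: number of nonzero entries. -/
def wt {m : ℕ} (α : Fin m → Fin 2) : ℕ :=
  (Finset.univ.filter fun i => α i ≠ 0).card

/-- The code `W([m/2],2)`: binary `m`-tuples of weight `(m+1)/2` or `(m-1)/2`. -/
def wCode (m : ℕ) : Set (Fin m → Fin 2) :=
  {α | wt α = (m+1)/2 ∨ wt α = (m-1)/2}

/-- The code `W([m/2],2)` over a general alphabet (used when `q = 2`): vertices in which
one letter occurs `(m+1)/2` times and another `(m-1)/2` times. -/
def wCodeGen (m q : ℕ) : Set (Fin m → Fin q) :=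
  {α | ∃ a b : Fin q, a ≠ b ∧ cnt α a = (m+1)/2 ∧ cnt α b = (m-1)/2}

end Weight

section PermCodes

/-- The vertex `α(g) = (1^g, …, q^g)` of `H(q,q)` associated with a permutation `g`. -/
def alphaVtx {q : ℕ} (g : Equiv.Perm (Fin q)) : Fin q → Fin q := fun i => g i

/-- The permutation code generated by a set `T` of permutations. -/
def permCode {q : ℕ} (T : Set (Equiv.Perm (Fin q))) : Set (Fin q → Fin q) :=
  alphaVtx '' T

end PermCodes

section Repetition

variable {I : Type*} [Fintype I] [DecidableEq I] {q : ℕ}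

/-- The `p`-fold repetition `rep_p(α) = (α,…,α)`, a vertex of `H(p·|I|, q)`. -/
def repv (p : ℕ) (α : I → Fin q) : Fin p × I → Fin q := fun ji => α ji.2

/-- The `p`-fold repetition code `Rep_p(C)`. -/
def repCodeP (p : ℕ) (C : Set (I → Fin q)) : Set (Fin p × I → Fin q) :=
  repv p '' C

/-- The homomorphism `Sym(V(H(I,q))) × S_p → Sym(V(H(p·|I|,q)))`: the pair `(x,σ)` acts on
`p`-tuples of vertices by `(α_1,…,α_p) ↦ (α_{σ⁻¹(1)}^x, …, α_{σ⁻¹(p)}^x)`. -/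
def repHom (p : ℕ) (I : Type*) [Fintype I] [DecidableEq I] (q : ℕ) :
    Equiv.Perm (I → Fin q) × Equiv.Perm (Fin p) →* Equiv.Perm (Fin p × I → Fin q) where
  toFun x :=
    { toFun := fun β ji => x.1 (fun i => β (x.2⁻¹ ji.1, i)) ji.2
      invFun := fun β ji => x.1⁻¹ (fun i => β (x.2 ji.1, i)) ji.2
      left_inv := by intro β; funext ji; simp
      right_inv := by intro β; funext ji; simp }
  map_one' := by ext β ji; simp
  map_mul' x y := by ext β ji; simp [mul_inv_rev]

end Repetition

/-!
An automorphism of `H(I,q)` preserves adjacency, hence (Hamming distance being a path metric)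
all distances. Composed with a letter permutation it fixes a constant word `z`, so it permutes
the words of weight one, `update z i a`; two of these are at distance `2` exactly when their
coordinates differ, so coordinate lines go to coordinate lines, say `i ↦ σ i`. Since `x i = a`
can be read off the distances from `x` to `z` and to `update z i a`, the letter at `σ i` of the
image of `x` depends only on `x i`: the automorphism is `tvp g σ`.

If `tvp g σ` stabilises `Inj` then all `g i` agree: otherwise some injective word with letters
`a` at `i` and `(g i')⁻¹ (g i a)` at `i'` is sent to a non-injective one. Conversely
`Diag(S_q) ⋊ L` is transitive on injective words, and on the neighbours of `Inj`, which are the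
words `update β i (β j)` with `β` injective and `i ≠ j`. A letter missing from an injective word
(`m < q`) gives two codewords at distance `1`.
-/

open Finset Function

section HammingUpdate

variable {ι β : Type*} [Fintype ι] [DecidableEq β]

theorem hammingDist_comp_perm (x y : ι → β) (σ : Perm ι) :
    hammingDist (x ∘ σ) (y ∘ σ) = hammingDist x y :=
  card_equiv σ (by simp)

variable [DecidableEq ι]

theorem hammingDist_update_add (x y : ι → β) (i : ι) (a : β) :
    hammingDist x (update y i a) + (if x i = y i then 0 else 1) =
      hammingDist x y + (if x i = a then 0 else 1) := by
  have hrest : ∑ j ∈ univ.erase i, (if x j ≠ update y i a j then 1 else 0) =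
      ∑ j ∈ univ.erase i, (if x j ≠ y j then 1 else 0) :=
    sum_congr rfl fun j hj => by rw [update_of_ne (ne_of_mem_erase hj)]
  simp only [hammingDist, card_filter, ← add_sum_erase _ _ (mem_univ i), hrest, update_self]
  simp only [ne_eq, ite_not]
  split_ifs <;> omega

theorem hammingDist_update_right (x : ι → β) (i : ι) (a : β) :
    hammingDist x (update x i a) = if x i = a then 0 else 1 := by
  simpa using hammingDist_update_add x x i a

theorem hammingDist_eq_one_iff {x y : ι → β} :
    hammingDist x y = 1 ↔ ∃ i a, a ≠ y i ∧ x = update y i a := by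
  constructor
  · intro h
    obtain ⟨i, hi⟩ : ∃ i, x i ≠ y i := by
      by_contra! hxy
      simp [funext hxy] at h
    refine ⟨i, x i, hi, hammingDist_eq_zero.1 ?_⟩
    have := hammingDist_update_add x y i (x i)
    simp only [hi, if_false, if_true, h] at this
    omega
  · rintro ⟨i, a, ha, rfl⟩
    rw [hammingDist_comm, hammingDist_update_right, if_neg ha.symm]

theorem exists_hammingDist_eq_one_of_hammingDist_eq_succ {x y : ι → β} {n : ℕ}
    (h : hammingDist x y = n + 1) : ∃ w, hammingDist x w = 1 ∧ hammingDist w y = n := by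
  obtain ⟨i, hi⟩ : ∃ i, x i ≠ y i := by
    by_contra! hxy
    simp [funext hxy] at h
  refine ⟨update x i (y i), by rw [hammingDist_update_right, if_neg hi], ?_⟩
  have := hammingDist_update_add y x i (y i)
  rw [if_neg (Ne.symm hi), if_pos rfl, hammingDist_comm y x, h] at this
  rw [hammingDist_comm]
  omega

theorem hammingDist_le_of_hammingDist_eq_one {f : (ι → β) → ι → β}
    (hf : ∀ x y, hammingDist x y = 1 → hammingDist (f x) (f y) = 1) (x y : ι → β) :
    hammingDist (f x) (f y) ≤ hammingDist x y := by
  induction h : hammingDist x y generalizing x with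
  | zero => simp [hammingDist_eq_zero.1 h]
  | succ n ih =>
    obtain ⟨w, hxw, hwy⟩ := exists_hammingDist_eq_one_of_hammingDist_eq_succ h
    calc hammingDist (f x) (f y) ≤ hammingDist (f x) (f w) + hammingDist (f w) (f y) :=
          hammingDist_triangle _ _ _
      _ ≤ 1 + n := by rw [hf x w hxw]; exact Nat.add_le_add_left (ih w hwy) 1
      _ = n + 1 := add_comm 1 n

end HammingUpdate

section ConstantWord

variable {ι β : Type*} [Fintype ι] [DecidableEq ι] [DecidableEq β] {z : β}

theorem hammingDist_update_const_eq_two_iff {a b : β} (ha : a ≠ z) (hb : b ≠ z) (i j : ι) :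
    hammingDist (update (const ι z) i a) (update (const ι z) j b) = 2 ↔ i ≠ j := by
  have hkey := hammingDist_update_add (update (const ι z) i a) (const ι z) j b
  rw [hammingDist_eq_one_iff.2 ⟨i, a, ha, rfl⟩] at hkey
  by_cases hij : i = j
  · subst hij
    simp only [update_self, const_apply, if_neg ha] at hkey
    simp only [ne_eq, not_true_eq_false, iff_false]
    split_ifs at hkey <;> omega
  · simp only [update_of_ne (Ne.symm hij), const_apply, if_pos, if_neg (Ne.symm hb)] at hkey
    simpa [hij] using hkey

theorem apply_eq_iff_hammingDist_update_const {a : β} (ha : a ≠ z) (x : ι → β) (i : ι) :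
    x i = a ↔ hammingDist x (update (const ι z) i a) + 1 = hammingDist x (const ι z) := by
  have hkey := hammingDist_update_add x (const ι z) i a
  by_cases hxa : x i = a <;> by_cases hxz : x i = z <;>
    simp only [const_apply, hxa, hxz, ha, ha.symm, if_true, if_false, true_iff, false_iff]
      at hkey ⊢ <;>
    omega

theorem apply_eq_const_iff_hammingDist_update_const {a : β} (ha : a ≠ z) (x : ι → β) (i : ι) :
    x i = z ↔ hammingDist x (update (const ι z) i a) = hammingDist x (const ι z) + 1 := by
  have hkey := hammingDist_update_add x (const ι z) i a
  by_cases hxa : x i = a <;> by_cases hxz : x i = z <;>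
    simp only [const_apply, hxa, hxz, ha, ha.symm, if_true, if_false, true_iff, false_iff]
      at hkey ⊢ <;>
    omega

end ConstantWord

section Isometry

variable {ι β : Type*} [Fintype ι] [DecidableEq ι] [DecidableEq β] [Nontrivial β] {z : β}
  {f : (ι → β) → ι → β}

theorem exists_update_const_eq_of_isometry
    (hf : ∀ x y, hammingDist (f x) (f y) = hammingDist x y) (hfz : f (const ι z) = const ι z)
    (i : ι) : ∃ j, ∀ a ≠ z, ∃ b ≠ z, f (update (const ι z) i a) = update (const ι z) j b := by
  obtain ⟨o, ho⟩ := exists_ne z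
  have hweight (a : β) (ha : a ≠ z) :
      ∃ j, ∃ b ≠ z, f (update (const ι z) i a) = update (const ι z) j b := by
    have := hf (update (const ι z) i a) (const ι z)
    rw [hfz, hammingDist_eq_one_iff.2 ⟨i, a, ha, rfl⟩] at this
    exact hammingDist_eq_one_iff.1 this
  obtain ⟨j, b₀, hb₀, h₀⟩ := hweight o ho
  refine ⟨j, fun a ha => ?_⟩
  obtain ⟨j', b, hb, h⟩ := hweight a ha
  obtain rfl : j' = j := by
    by_contra hne
    have h2 := (hammingDist_update_const_eq_two_iff hb hb₀ j' j).2 hne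
    rw [← h, ← h₀, hf, hammingDist_update_const_eq_two_iff ha ho] at h2
    exact h2 rfl
  exact ⟨b, hb, h⟩

theorem apply_eq_apply_update_const_of_isometry
    (hf : ∀ x y, hammingDist (f x) (f y) = hammingDist x y) (hfz : f (const ι z) = const ι z)
    {i j : ι} (hij : ∀ a ≠ z, ∃ b ≠ z, f (update (const ι z) i a) = update (const ι z) j b)
    (x : ι → β) : f x j = f (update (const ι z) i (x i)) j := by
  have hweight : hammingDist (f x) (const ι z) = hammingDist x (const ι z) := by
    simpa only [hfz] using hf x (const ι z)
  by_cases hxz : x i = z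
  · obtain ⟨o, ho⟩ := exists_ne z
    obtain ⟨b, hb, h⟩ := hij o ho
    rw [hxz, update_eq_self_iff.2 (const_apply (y := z)).symm, hfz, const_apply,
      apply_eq_const_iff_hammingDist_update_const hb, ← h, hf, hweight,
      ← apply_eq_const_iff_hammingDist_update_const ho, hxz]
  · obtain ⟨b, hb, h⟩ := hij (x i) hxz
    rw [h, update_self, apply_eq_iff_hammingDist_update_const hb, ← h, hf, hweight,
      ← apply_eq_iff_hammingDist_update_const hxz]

theorem exists_perm_apply_eq_of_isometry [Finite β]
    (hf : ∀ x y, hammingDist (f x) (f y) = hammingDist x y) (hfz : f (const ι z) = const ι z) :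
    ∃ (σ : Perm ι) (g : ι → Perm β), ∀ x i, f x (σ i) = g i (x i) := by
  choose σ hσ using exists_update_const_eq_of_isometry hf hfz
  have hloc (x : ι → β) (i : ι) := apply_eq_apply_update_const_of_isometry hf hfz (hσ i) x
  have hσinj : Injective σ := by
    intro i i' hii'
    by_contra hne
    obtain ⟨o, ho⟩ := exists_ne z
    obtain ⟨b, hb, h⟩ := hσ i o ho
    obtain ⟨b', hb', h'⟩ := hσ i' o ho
    have h2 := (hammingDist_update_const_eq_two_iff ho ho i i').2 hne
    rw [← hf, h, h', hammingDist_update_const_eq_two_iff hb hb'] at h2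
    exact h2 hii'
  have hσsurj : Surjective σ := Finite.surjective_of_injective hσinj
  have hfinj : Injective f := fun x y hxy =>
    hammingDist_eq_zero.1 (by rw [← hf, hxy, hammingDist_self])
  have hginj (i : ι) : Injective fun a => f (update (const ι z) i a) (σ i) := by
    intro a a' haa'
    have hupd : f (update (const ι z) i a) = f (update (const ι z) i a') := by
      funext k
      obtain ⟨i', rfl⟩ := hσsurj k
      by_cases hi' : i' = i
      · subst hi'
        exact haa'
      · rw [hloc, hloc (update (const ι z) i a'), update_of_ne hi', update_of_ne hi']
    simpa using congrFun (hfinj hupd) i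
  exact ⟨Equiv.ofBijective σ ⟨hσinj, hσsurj⟩,
    fun i => Equiv.ofBijective _ (Finite.injective_iff_bijective.1 (hginj i)), fun x i => hloc x i⟩

end Isometry

section Automorphisms

variable {I : Type*} {q : ℕ}

theorem tvp_apply (g : I → Perm (Fin q)) (σ : Perm I) (α : I → Fin q) (i : I) :
    tvp g σ α i = g (σ⁻¹ i) (α (σ⁻¹ i)) := rfl

theorem tvp_mul (g g' : I → Perm (Fin q)) (σ σ' : Perm I) :
    tvp g σ * tvp g' σ' = tvp (fun i => g (σ' i) * g' i) (σ * σ') := by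
  ext α i : 2
  simp [tvp_apply]

theorem tvp_const_eq_of_forall_apply_eq {h : Perm (Fin q)} {σ : Perm I} {v β : I → Fin q}
    (hh : ∀ k, h (v k) = β (σ k)) : tvp (fun _ => h) σ v = β := by
  funext k
  rw [tvp_apply, hh, Perm.coe_inv, apply_symm_apply]

theorem tvp_update [DecidableEq I] (g : I → Perm (Fin q)) (σ : Perm I) (α : I → Fin q)
    (i : I) (a : Fin q) : tvp g σ (update α i a) = update (tvp g σ α) (σ i) (g i a) := by
  funext k
  obtain ⟨k, rfl⟩ := σ.surjective k
  by_cases hk : k = i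
  · subst hk
    simp [tvp_apply]
  · simp [tvp_apply, hk]

theorem hammingDist_tvp [Fintype I] (g : I → Perm (Fin q)) (σ : Perm I) (α β : I → Fin q) :
    hammingDist (tvp g σ α) (tvp g σ β) = hammingDist α β := by
  have hcomp (γ : I → Fin q) : tvp g σ γ = (fun i => g i (γ i)) ∘ ⇑σ⁻¹ := rfl
  rw [hcomp, hcomp, hammingDist_comp_perm, hammingDist_comp _ fun i => (g i).injective]

theorem tvp_mem_autH [Fintype I] [DecidableEq I] (g : I → Perm (Fin q)) (σ : Perm I) :
    tvp g σ ∈ autH I q :=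
  fun α β => by rw [hammingDist_tvp]

theorem hammingDist_apply_of_mem_autH [Fintype I] [DecidableEq I] {y : Perm (I → Fin q)}
    (hy : y ∈ autH I q) (α β : I → Fin q) : hammingDist (y α) (y β) = hammingDist α β := by
  refine le_antisymm (hammingDist_le_of_hammingDist_eq_one (fun α β => (hy α β).2) α β) ?_
  simpa using hammingDist_le_of_hammingDist_eq_one
    (fun α β => ((autH I q).inv_mem hy α β).2) (y α) (y β)

theorem mem_autH_iff [Fintype I] [DecidableEq I] {y : Perm (I → Fin q)} :
    y ∈ autH I q ↔ ∃ g σ, y = tvp g σ := by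
  refine ⟨fun hy => ?_, fun ⟨g, σ, hy⟩ => hy ▸ tvp_mem_autH g σ⟩
  rcases le_or_gt q 1 with hq | hq
  · have : Subsingleton (Fin q) := Fin.subsingleton_iff_le_one.2 hq
    exact ⟨1, 1, Subsingleton.elim _ _⟩
  have : Nontrivial (Fin q) := Fin.nontrivial_iff_two_le.2 hq
  set z : Fin q := ⟨0, by omega⟩
  set t := tvp (fun i => swap (y (const I z) i) z) 1
  have ht : t * t = 1 := by
    ext α i : 2
    simp [t, tvp_apply]
  have htyz : (t * y) (const I z) = const I z := by
    funext i
    simp [t, tvp_apply]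
  obtain ⟨σ, g, hg⟩ := exists_perm_apply_eq_of_isometry
    (hammingDist_apply_of_mem_autH (mul_mem (tvp_mem_autH _ _) hy)) htyz
  have hty : t * y = tvp g σ := by
    ext α k : 2
    obtain ⟨i, rfl⟩ := σ.surjective k
    rw [tvp_apply, Perm.coe_inv, symm_apply_apply]
    exact hg α i
  have hyt : y = t * tvp g σ := by rw [← hty, ← mul_assoc, ht, one_mul]
  exact ⟨_, _, hyt.trans (tvp_mul _ _ _ _)⟩

end Automorphisms

theorem Nat.sInf_eq_one_iff {s : Set ℕ} : sInf s = 1 ↔ 1 ∈ s ∧ 0 ∉ s := by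
  refine ⟨fun h => ⟨h ▸ Nat.sInf_mem (Nat.nonempty_of_sInf_eq_succ h), fun h0 => ?_⟩,
    fun ⟨h1, h0⟩ => le_antisymm (Nat.sInf_le h1) (Nat.one_le_iff_ne_zero.2 fun h => ?_)⟩
  · simp [Nat.sInf_eq_zero.2 (Or.inl h0)] at h
  · rcases Nat.sInf_eq_zero.1 h with h | h
    · exact h0 h
    · simp [h] at h1

section Codes

variable {I : Type*} {q : ℕ}

theorem mem_cell_one_iff [Fintype I] {C : Set (I → Fin q)} {γ : I → Fin q} :
    γ ∈ cell C 1 ↔ γ ∉ C ∧ ∃ β ∈ C, hammingDist γ β = 1 := by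
  simp [cell, distC, Nat.sInf_eq_one_iff, hammingDist_eq_zero, and_comm]

theorem minDist_eq_one [Fintype I] {C : Set (I → Fin q)}
    (h : ∃ β ∈ C, ∃ γ ∈ C, hammingDist β γ = 1) : minDist C = 1 := by
  obtain ⟨β, hβ, γ, hγ, hd⟩ := h
  refine Nat.sInf_eq_one_iff.2 ⟨⟨β, hβ, γ, hγ, ?_, hd⟩, fun ⟨_, _, _, _, hne, h0⟩ => ?_⟩
  · rintro rfl
    simp at hd
  · exact hne (hammingDist_eq_zero.1 h0)

theorem mem_autCode_iff [Fintype I] [DecidableEq I] {C : Set (I → Fin q)} {x : Perm (I → Fin q)} :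
    x ∈ autCode C ↔ x ∈ autH I q ∧ ∀ β, x β ∈ C ↔ β ∈ C := by
  refine Iff.and Iff.rfl ⟨fun hx β => ?_, fun hx => Set.ext fun γ => ?_⟩
  · rw [← Set.smul_mem_smul_set_iff (a := x) (x := β), MulAction.mem_stabilizer_iff.1 hx]
    rfl
  · rw [Set.mem_smul_set_iff_inv_smul_mem, ← hx]
    simp [Perm.smul_def]

theorem distC_apply_of_mem_autCode [Fintype I] [DecidableEq I] {C : Set (I → Fin q)}
    {x : Perm (I → Fin q)} (hx : x ∈ autCode C) (γ : I → Fin q) : distC (x γ) C = distC γ C := by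
  obtain ⟨hxH, hxC⟩ := mem_autCode_iff.1 hx
  unfold distC
  congr 1
  ext d
  constructor
  · rintro ⟨β, hβ, rfl⟩
    refine ⟨x⁻¹ β, by rwa [← hxC, Perm.coe_inv, apply_symm_apply], ?_⟩
    rw [← hammingDist_apply_of_mem_autH hxH, Perm.coe_inv, apply_symm_apply]
  · rintro ⟨β, hβ, rfl⟩
    exact ⟨x β, (hxC β).2 hβ, hammingDist_apply_of_mem_autH hxH γ β⟩

theorem isOrbitOf_of_forall {X : Subgroup (Perm (I → Fin q))} {S : Set (I → Fin q)}
    {v : I → Fin q} (hmaps : ∀ x ∈ X, x v ∈ S) (hreach : ∀ w ∈ S, ∃ x ∈ X, x v = w) :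
    IsOrbitOf X S :=
  ⟨v, Set.ext fun w => ⟨hreach w, fun ⟨x, hx, hxw⟩ => hxw ▸ hmaps x hx⟩⟩

end Codes

section InjectionCode

variable {I : Type*} [Fintype I] [DecidableEq I] {q : ℕ}

theorem tvp_const_mem_injCode_iff (h : Perm (Fin q)) (σ : Perm I) (β : I → Fin q) :
    tvp (fun _ => h) σ β ∈ injCode I q ↔ β ∈ injCode I q :=
  show Injective (h ∘ β ∘ ⇑σ⁻¹) ↔ Injective β by
    rw [EquivLike.comp_injective, EquivLike.injective_comp]

theorem diagL_le_autCode_injCode : diagL I q ≤ autCode (injCode I q) := by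
  rintro _ ⟨⟨h, σ⟩, rfl⟩
  exact mem_autCode_iff.2 ⟨tvp_mem_autH (fun _ => h) σ, tvp_const_mem_injCode_iff h σ⟩

theorem injCode_isOrbitOf_diagL (hI : Fintype.card I ≤ q) :
    IsOrbitOf (diagL I q) (injCode I q) := by
  obtain ⟨v⟩ := Function.Embedding.nonempty_of_card_le (β := Fin q) (by simpa using hI)
  refine isOrbitOf_of_forall (v := v) (fun x hx => ?_) fun w hw => ?_
  · exact ((mem_autCode_iff.1 (diagL_le_autCode_injCode hx)).2 v).2 v.injective
  · obtain ⟨h, hh⟩ := Perm.exists_extending_pair v w v.injective hw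
    exact ⟨_, ⟨(h, 1), rfl⟩, tvp_const_eq_of_forall_apply_eq (σ := 1) hh⟩

theorem mem_cell_one_injCode_iff {γ : I → Fin q} :
    γ ∈ cell (injCode I q) 1 ↔ ∃ β ∈ injCode I q, ∃ i j, i ≠ j ∧ γ = update β i (β j) := by
  constructor
  · rw [mem_cell_one_iff]
    rintro ⟨hγ, β, hβ, hd⟩
    obtain ⟨i, a, -, rfl⟩ := hammingDist_eq_one_iff.1 hd
    obtain ⟨k, l, hkl_eq, hkl⟩ := Function.not_injective_iff.1 hγ
    by_cases hk : k = i
    · subst hk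
      rw [update_self, update_of_ne (Ne.symm hkl)] at hkl_eq
      exact ⟨β, hβ, k, l, hkl, by rw [hkl_eq]⟩
    by_cases hl : l = i
    · subst hl
      rw [update_self, update_of_ne hkl] at hkl_eq
      exact ⟨β, hβ, l, k, Ne.symm hkl, by rw [← hkl_eq]⟩
    rw [update_of_ne hk, update_of_ne hl] at hkl_eq
    exact absurd (hβ hkl_eq) hkl
  · rintro ⟨β, hβ, i, j, hij, rfl⟩
    refine mem_cell_one_iff.2 ⟨fun hinj => hij (hinj ?_), β, hβ, ?_⟩
    · rw [update_self, update_of_ne (Ne.symm hij)]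
    · rw [hammingDist_comm, hammingDist_update_right, if_neg (hβ.ne hij)]

theorem cell_one_injCode_isOrbitOf_diagL (hI : Fintype.card I ≤ q) (hI1 : 1 < Fintype.card I) :
    IsOrbitOf (diagL I q) (cell (injCode I q) 1) := by
  obtain ⟨v⟩ := Function.Embedding.nonempty_of_card_le (β := Fin q) (by simpa using hI)
  obtain ⟨i₀, j₀, hij₀⟩ := Fintype.exists_pair_of_one_lt_card hI1
  have hγ₀ : update v i₀ (v j₀) ∈ cell (injCode I q) 1 :=
    mem_cell_one_injCode_iff.2 ⟨v, v.injective, i₀, j₀, hij₀, rfl⟩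
  refine isOrbitOf_of_forall (v := update v i₀ (v j₀)) (fun x hx => ?_) fun w hw => ?_
  · exact (distC_apply_of_mem_autCode (diagL_le_autCode_injCode hx) _).trans hγ₀
  obtain ⟨β, hβ, i, j, hij, rfl⟩ := mem_cell_one_injCode_iff.1 hw
  obtain ⟨σ, hσ⟩ := Perm.exists_extending_pair ![i₀, j₀] ![i, j]
    (injective_pair_iff_ne.2 hij₀) (injective_pair_iff_ne.2 hij)
  obtain ⟨h, hh⟩ := Perm.exists_extending_pair v (β ∘ σ) v.injective (hβ.comp σ.injective)
  refine ⟨_, ⟨(h, σ), rfl⟩, ?_⟩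
  change tvp (fun _ => h) σ (update v i₀ (v j₀)) = _
  rw [tvp_update, tvp_const_eq_of_forall_apply_eq hh, hh]
  simpa using congrArg₂ (fun k l => update β k (β l)) (hσ 0) (hσ 1)

theorem injCode_minDist [Nonempty I] (hI : Fintype.card I < q) : minDist (injCode I q) = 1 := by
  obtain ⟨v⟩ := Function.Embedding.nonempty_of_card_le (β := Fin q) (by simpa using hI.le)
  obtain ⟨c, hc⟩ : ∃ c, ∀ k, v k ≠ c := by
    by_contra! hsurj
    simpa using (Fintype.card_le_of_surjective v hsurj).trans_lt hI
  let i₀ : I := Classical.arbitrary I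
  have hinj : Injective (update v i₀ c) := by
    intro k l hkl
    rcases eq_or_ne k i₀ with rfl | hk <;> rcases eq_or_ne l i₀ with rfl | hl <;>
      simp_all [update_of_ne, v.injective.eq_iff]
  exact minDist_eq_one ⟨v, v.injective, _, hinj, by rw [hammingDist_update_right, if_neg (hc i₀)]⟩

theorem exists_mem_injCode_apply_eq (hI : Fintype.card I ≤ q) {i i' : I} (hii' : i ≠ i')
    {a b : Fin q} (hab : a ≠ b) : ∃ α ∈ injCode I q, α i = a ∧ α i' = b := by
  obtain ⟨v⟩ := Function.Embedding.nonempty_of_card_le (β := Fin q) (by simpa using hI)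
  obtain ⟨h, hh⟩ := Perm.exists_extending_pair ![v i, v i'] ![a, b]
    (injective_pair_iff_ne.2 (v.injective.ne hii')) (injective_pair_iff_ne.2 hab)
  exact ⟨h ∘ v, h.injective.comp v.injective, hh 0, hh 1⟩

theorem autCode_injCode_le_diagL (hI : Fintype.card I ≤ q) :
    autCode (injCode I q) ≤ diagL I q := by
  intro y hy
  obtain ⟨hyH, hyC⟩ := mem_autCode_iff.1 hy
  obtain ⟨g, σ, rfl⟩ := mem_autH_iff.1 hyH
  have hg (i i' : I) : g i = g i' := by
    ext a : 1
    by_contra hne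
    have hii' : i ≠ i' := by
      rintro rfl
      exact hne rfl
    set b := (g i')⁻¹ (g i a)
    have hgb : g i' b = g i a := by simp [b]
    obtain ⟨α, hα, hαi, hαi'⟩ :=
      exists_mem_injCode_apply_eq hI hii' (a := a) (b := b) fun hab => hne (by rw [← hgb, hab])
    refine hii' (σ.injective ((hyC α).2 hα ?_))
    rw [tvp_apply, tvp_apply]
    simp [hαi, hαi', hgb]
  rcases isEmpty_or_nonempty I with hI0 | ⟨⟨i₀⟩⟩
  · exact ⟨(1, σ), show tvp (fun _ => 1) σ = tvp g σ from
      congrArg (tvp · σ) (funext isEmptyElim)⟩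
  · exact ⟨(g i₀, σ), congrArg (tvp · σ) (funext (hg i₀))⟩

end InjectionCode

/-- Theorem 3.3(ii): for `2 ≤ m < q`, the injection code `Inj(m,q)` is
neighbour transitive, `Aut(Inj(m,q)) = Diag_m(S_q) ⋊ L`, and its minimum distance is `1`. -/
theorem injCode_neighbour_transitive (m q : ℕ) (hm : 2 ≤ m) (hmq : m < q) :
    (∃ X : Subgroup (Equiv.Perm (Fin m → Fin q)), NbrTransitive X (injCode (Fin m) q)) ∧
    autCode (injCode (Fin m) q) = diagL (Fin m) q ∧
    minDist (injCode (Fin m) q) = 1 := by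
  have hcard : Fintype.card (Fin m) = m := Fintype.card_fin m
  have : Nonempty (Fin m) := ⟨⟨0, by omega⟩⟩
  refine ⟨⟨diagL (Fin m) q, diagL_le_autCode_injCode.trans inf_le_left,
      injCode_isOrbitOf_diagL (by omega), cell_one_injCode_isOrbitOf_diagL (by omega) (by omega)⟩,
    le_antisymm (autCode_injCode_le_diagL (by omega)) diagL_le_autCode_injCode,
    injCode_minDist (by omega)⟩
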